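/- Let X be a locally compact Tychonoff space and let Y = X ∪ {p} be a one-point Tychonoff extension of X. Then Y is Čech-complete if and only if Θ_X(Y) = τ_Y⁻¹(p) is a zero-set of the subspace βX\X. -/

import Mathlib

open Set Topology Filter

universe u

/-- A one-point Tychonoff extension of `X`: a Tychonoff space containing (a homeomorphic copy
of) `X` as a dense subspace whose complement is a single point `pt`. -/
structure OnePointExt (X : Type u) [TopologicalSpace X] : Type (u + 1) where
  carrier : Type u
  top : TopologicalSpace carrier
  t35 : @T35Space carrier top
  ι : X → carrier
  emb : @Topology.IsEmbedding X carrier _ top ι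
  pt : carrier
  range_eq : Set.range ι = {pt}ᶜ
  dense : @DenseRange carrier top X ι

attribute [instance] OnePointExt.top OnePointExt.t35

variable {X : Type u} [TopologicalSpace X]

/-- The partial order on one-point extensions: `Y₁ ≤ Y₂` iff there is a continuous map from
`Y₂` into `Y₁` fixing `X` pointwise. -/
def OnePointExt.le (Y1 Y2 : OnePointExt X) : Prop :=
  ∃ f : Y2.carrier → Y1.carrier, Continuous f ∧ ∀ x, f (Y2.ι x) = Y1.ι x

/-- Equivalence of extensions: a homeomorphism fixing `X` pointwise. -/
def OnePointExt.equiv (Y1 Y2 : OnePointExt X) : Prop :=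
  ∃ h : Y1.carrier ≃ₜ Y2.carrier, ∀ x, h (Y1.ι x) = Y2.ι x

/-- `τ_Y : βX → βY`, the unique continuous extension of `id_X`. -/
noncomputable def OnePointExt.tau (Y : OnePointExt X) : StoneCech X → StoneCech Y.carrier :=
  stoneCechExtend (continuous_stoneCechUnit.comp Y.emb.continuous)

/-- `Θ_X(Y) = τ_Y⁻¹(Y \ X)`, a subset of `βX`. -/
noncomputable def OnePointExt.theta (Y : OnePointExt X) : Set (StoneCech X) :=
  Y.tau ⁻¹' {stoneCechUnit Y.pt}

/-- A zero-set: `f⁻¹(0)` for a continuous `f : Z → [0,1]`. -/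
def IsZeroSet {Z : Type u} [TopologicalSpace Z] (A : Set Z) : Prop :=
  ∃ f : Z → unitInterval, Continuous f ∧ A = f ⁻¹' {0}

/-- A cozero-set: a complement of a zero-set. -/
def IsCozeroSet {Z : Type u} [TopologicalSpace Z] (A : Set Z) : Prop :=
  ∃ f : Z → unitInterval, Continuous f ∧ A = (f ⁻¹' {0})ᶜ

/-- `λ_P X = ⋃ { int_{βX} cl_{βX} C : C a cozero-set of X whose closure in X has P }`. -/
def lambdaP (P : (Z : Type u) → [TopologicalSpace Z] → Prop) (X : Type u)
    [TopologicalSpace X] : Set (StoneCech X) :=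
  ⋃ C ∈ {C : Set X | IsCozeroSet C ∧ P (closure C)},
    interior (closure (stoneCechUnit '' C))

/-- A pseudocompact space: every continuous real-valued function is bounded. -/
def Pseudocompact (Z : Type u) [TopologicalSpace Z] : Prop :=
  ∀ f : Z → ℝ, Continuous f → ∃ M, ∀ z, |f z| ≤ M

/-- `P` is a topological property: it is invariant under homeomorphisms. -/
def TopProperty (P : (Z : Type u) → [TopologicalSpace Z] → Prop) : Prop :=
  ∀ (Z W : Type u) [TopologicalSpace Z] [TopologicalSpace W], Z ≃ₜ W → P Z → P W

/-- `P` is closed hereditary: closed subspaces of a space with `P` have `P`. -/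
def ClosedHereditary (P : (Z : Type u) → [TopologicalSpace Z] → Prop) : Prop :=
  ∀ (Z : Type u) [TopologicalSpace Z], P Z → ∀ F : Set Z, IsClosed F → P F

/-- `P` is preserved under finite closed sums of subspaces. -/
def FiniteClosedSums (P : (Z : Type u) → [TopologicalSpace Z] → Prop) : Prop :=
  ∀ (Z : Type u) [TopologicalSpace Z] [T2Space Z] (n : ℕ) (F : Fin n → Set Z),
    (∀ i, IsClosed (F i)) → (∀ i, P (F i)) → (⋃ i, F i) = univ → P Z

/-- `P` is preserved under locally finite closed sums of subspaces. -/
def LocallyFiniteClosedSums (P : (Z : Type u) → [TopologicalSpace Z] → Prop) : Prop :=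
  ∀ (Z : Type u) [TopologicalSpace Z] [T2Space Z] (ι : Type u) (F : ι → Set Z),
    LocallyFinite F → (∀ i, IsClosed (F i)) → (∀ i, P (F i)) → (⋃ i, F i) = univ → P Z

/-- `P` is preserved under countable closed sums of subspaces. -/
def CountableClosedSums (P : (Z : Type u) → [TopologicalSpace Z] → Prop) : Prop :=
  ∀ (Z : Type u) [TopologicalSpace Z] [T2Space Z] (F : ℕ → Set Z),
    (∀ i, IsClosed (F i)) → (∀ i, P (F i)) → (⋃ i, F i) = univ → P Z

/-- Mrówka's condition (W): if a Tychonoff space `T` has a point `p` with an open base `B` at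
`p` such that `T \ b` has `P` for each `b ∈ B`, then `T` has `P`. -/
def MrowkaW (P : (Z : Type u) → [TopologicalSpace Z] → Prop) : Prop :=
  ∀ (T : Type u) [TopologicalSpace T] [T35Space T] (p : T) (B : Set (Set T)),
    (∀ b ∈ B, IsOpen b ∧ p ∈ b) →
    (∀ V : Set T, IsOpen V → p ∈ V → ∃ b ∈ B, b ⊆ V) →
    (∀ b ∈ B, P (↥(bᶜ))) → P T

/-- `X` is locally-P: every point has an open neighborhood whose closure has `P`. -/
def LocallyP (P : (Z : Type u) → [TopologicalSpace Z] → Prop)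
    (X : Type u) [TopologicalSpace X] : Prop :=
  ∀ x : X, ∃ U : Set X, IsOpen U ∧ x ∈ U ∧ P (closure U)

/-- `P` coincides with pseudocompactness. -/
def IsPseudocompactness (P : (Z : Type u) → [TopologicalSpace Z] → Prop) : Prop :=
  ∀ (Z : Type u) [TopologicalSpace Z], P Z ↔ Pseudocompact Z

/-- A `P`-far one-point extension: for every zero-set `Z` of `X` contained in a cozero-set `C`
of `X` whose closure has `P`, the closure of `Z` in the extension misses the remainder. -/
def OnePointExt.PFar (P : (Z : Type u) → [TopologicalSpace Z] → Prop)
    (Y : OnePointExt X) : Prop :=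
  ∀ Z C : Set X, IsZeroSet Z → IsCozeroSet C → P (closure C) → Z ⊆ C →
    Y.pt ∉ closure (Y.ι '' Z)

/-- Čech-complete: `Z` is a Gδ-set in `βZ`. -/
def CechComplete (Z : Type u) [TopologicalSpace Z] : Prop :=
  IsGδ (Set.range (stoneCechUnit : Z → StoneCech Z))

/-- The extension is first countable at the added point. -/
def OnePointExt.FirstCountableAtPt (Y : OnePointExt X) : Prop :=
  (𝓝 Y.pt).IsCountablyGenerated

/-- Strong zero-dimensionality: `βX` has an open base of clopen sets. -/
def StronglyZeroDimensional (X : Type u) [TopologicalSpace X] : Prop :=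
  ∀ U : Set (StoneCech X), IsOpen U → ∀ x ∈ U,
    ∃ V : Set (StoneCech X), IsClopen V ∧ x ∈ V ∧ V ⊆ U

/-- `Δ` is an order-isomorphism from the subset `A` of one-point extensions of `X` (with the
order `≤`) onto the subset `B` of one-point extensions of `Y`, where extensions are regarded
up to the equivalence `OnePointExt.equiv`: `Δ` maps `A` into `B`, reflects and preserves `≤`
on `A`, and every member of `B` is equivalent to the image of a member of `A`. -/
def RestrictedOrderIso {X Y : Type u} [TopologicalSpace X] [TopologicalSpace Y]
    (A : Set (OnePointExt X)) (B : Set (OnePointExt Y))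
    (Δ : OnePointExt X → OnePointExt Y) : Prop :=
  (∀ T ∈ A, Δ T ∈ B) ∧
  (∀ T1 ∈ A, ∀ T2 ∈ A, (T1.le T2 ↔ (Δ T1).le (Δ T2))) ∧
  (∀ S ∈ B, ∃ T ∈ A, (Δ T).equiv S)

/-!
Since `X` is locally compact and dense, it is open both in `βX` and in `βY`, and the extension
`τ_Y : βX → βY` of the identity maps no point of the remainder `βX \ X` into `X`. Hence `τ_Y`
restricts to a continuous surjection `g : βX \ X → βY \ X` of compact spaces with
`g⁻¹(p) = Θ_X(Y)`. As `X` is open in `βY`, the space `Y = X ∪ {p}` is a Gδ in `βY` exactly when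
`{p}` is a Gδ in `βY \ X`. Under the closed surjection `g` a set is a Gδ iff its preimage is,
and the closed Gδ sets of a compact space are precisely its zero-sets.
-/

section GeneralTopology

variable {α β γ : Type*} [TopologicalSpace α] [TopologicalSpace β] [TopologicalSpace γ]

theorem Topology.IsEmbedding.isOpenEmbedding_of_denseRange [LocallyCompactSpace α] [T2Space β]
    {e : α → β} (he : IsEmbedding e) (hd : DenseRange e) : IsOpenEmbedding e := by
  refine ⟨he, isOpen_iff_mem_nhds.2 ?_⟩
  rintro _ ⟨x, rfl⟩
  obtain ⟨C, hC, hCx⟩ := exists_compact_mem_nhds x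
  obtain ⟨W, hW, hWC⟩ := he.isInducing.isOpen_iff.1 (isOpen_interior (s := C))
  have hWx : e x ∈ W := by rw [← mem_preimage, hWC]; exact mem_interior_iff_mem_nhds.2 hCx
  refine mem_of_superset (hW.mem_nhds hWx) fun y hy => ?_
  have hy_cl : y ∈ closure (e '' interior C) := by
    rw [← hWC, image_preimage_eq_inter_range]
    exact hd.open_subset_closure_inter hW hy
  exact image_subset_range e C <|
    closure_minimal (image_mono interior_subset) (hC.image he.continuous).isClosed hy_cl

theorem preimage_range_subset_range_of_comp_eq [LocallyCompactSpace α] [T2Space β]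
    {e : α → β} (he : Continuous e) (hd : DenseRange e) {F : β → γ} (hF : Continuous F)
    {j : α → γ} (hj : IsOpenEmbedding j) (hFe : F ∘ e = j) : F ⁻¹' range j ⊆ range e := by
  rintro q ⟨x, hx⟩
  obtain ⟨C, hC, hCx⟩ := exists_compact_mem_nhds x
  have hW : IsOpen (F ⁻¹' (j '' interior C)) :=
    (hj.isOpenMap _ isOpen_interior).preimage hF
  have hWe : F ⁻¹' (j '' interior C) ∩ range e = e '' interior C := by
    rw [inter_comm, ← image_preimage_eq_range_inter, ← preimage_comp, hFe,
      hj.injective.preimage_image]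
  have hq_cl : q ∈ closure (e '' interior C) := by
    rw [← hWe]
    exact hW.inter_closure ⟨⟨x, mem_interior_iff_mem_nhds.2 hCx, hx⟩, hd q⟩
  exact image_subset_range e C <|
    closure_minimal (image_mono interior_subset) (hC.image he).isClosed hq_cl

theorem isGδ_union_iff_of_isOpen {U s : Set α} (hU : IsOpen U) :
    IsGδ (U ∪ s) ↔ IsGδ ((↑) ⁻¹' s : Set ↥Uᶜ) := by
  constructor
  · intro h
    convert h.preimage continuous_subtype_val using 1
    ext z
    simp
  · intro h
    obtain ⟨T, hT, hsT⟩ := h.eq_iInter_nat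
    choose W hW hWT using fun n => isOpen_induced_iff.1 (hT n)
    convert IsGδ.iInter_of_isOpen fun n => (hW n).union hU using 1
    ext z
    by_cases hz : z ∈ U
    · simp [hz]
    · have key : (⟨z, hz⟩ : ↥Uᶜ) ∈ (↑) ⁻¹' s ↔ ∀ n, z ∈ W n := by
        rw [hsT, mem_iInter]
        simp only [← hWT, mem_preimage]
      simpa [hz] using key

theorem isGδ_preimage_iff_of_isClosedMap {f : α → β} (hf : Continuous f) (hc : IsClosedMap f)
    (hs : Function.Surjective f) {s : Set β} : IsGδ (f ⁻¹' s) ↔ IsGδ s := by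
  refine ⟨fun h => ?_, fun h => h.preimage hf⟩
  obtain ⟨W, hW, hsW⟩ := h.eq_iInter_nat
  -- `sᶜ` is the union of the closed sets `f '' (W n)ᶜ`, where `f ⁻¹' s = ⋂ n, W n`.
  have hs_eq : s = ⋂ n, (f '' (W n)ᶜ)ᶜ := by
    ext y
    obtain ⟨a, rfl⟩ := hs y
    have hpre : ∀ b, f b ∈ s ↔ ∀ n, b ∈ W n := fun b => by
      rw [← mem_preimage, hsW, mem_iInter]
    simp only [mem_iInter, mem_compl_iff, mem_image, not_exists, not_and]
    constructor
    · intro hy n b hb hba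
      exact hb ((hpre b).1 (hba ▸ hy) n)
    · intro hy
      exact (hpre a).2 fun n => by_contra fun ha => hy n a ha rfl
  rw [hs_eq]
  exact .iInter_of_isOpen fun n => (hc _ (hW n).isClosed_compl).isOpen_compl

theorem IsClosed.isZeroSet_iff_isGδ {Z : Type u} [TopologicalSpace Z] [CompactSpace Z]
    [T2Space Z] {F : Set Z} (hF : IsClosed F) : IsZeroSet F ↔ IsGδ F := by
  constructor
  · rintro ⟨f, hf, rfl⟩
    exact (IsGδ.singleton 0).preimage hf
  · intro h
    obtain ⟨f, hf1, -, -, hf01⟩ :=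
      exists_continuous_one_zero_of_isCompact_of_isGδ hF.isCompact h isClosed_empty
        (disjoint_empty _)
    refine ⟨fun z => unitInterval.symm ⟨f z, hf01 z⟩,
      unitInterval.continuous_symm.comp (f.continuous.subtype_mk _), ?_⟩
    ext z
    simp [hf1, Subtype.ext_iff, sub_eq_zero, eq_comm (a := f z)]

end GeneralTopology

theorem isOpen_range_stoneCechUnit [T35Space X] [LocallyCompactSpace X] :
    IsOpen (range (stoneCechUnit : X → StoneCech X)) :=
  (isEmbedding_stoneCechUnit.isOpenEmbedding_of_denseRange denseRange_stoneCechUnit).isOpen_range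

namespace OnePointExt

variable (Y : OnePointExt X)

theorem continuous_tau : Continuous Y.tau :=
  continuous_stoneCechExtend _

theorem tau_comp_stoneCechUnit : Y.tau ∘ stoneCechUnit = stoneCechUnit ∘ Y.ι :=
  stoneCechExtend_extends _

theorem denseRange_stoneCechUnit_comp_ι : DenseRange (stoneCechUnit ∘ Y.ι) :=
  denseRange_stoneCechUnit.comp Y.dense continuous_stoneCechUnit

theorem surjective_tau : Function.Surjective Y.tau := by
  have hd : DenseRange Y.tau := Y.denseRange_stoneCechUnit_comp_ι.mono <| by
    rw [← tau_comp_stoneCechUnit, range_comp]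
    exact image_subset_range _ _
  rw [← range_eq_univ, ← (isCompact_range Y.continuous_tau).isClosed.closure_eq, hd.closure_range]

theorem range_stoneCechUnit :
    range (stoneCechUnit : Y.carrier → StoneCech Y.carrier) =
      range (stoneCechUnit ∘ Y.ι) ∪ {stoneCechUnit Y.pt} := by
  rw [range_comp, Y.range_eq, ← image_singleton, ← image_union, compl_union_self, image_univ]

variable [LocallyCompactSpace X]

theorem isOpenEmbedding_stoneCechUnit_comp_ι : IsOpenEmbedding (stoneCechUnit ∘ Y.ι) :=
  (isEmbedding_stoneCechUnit.comp Y.emb).isOpenEmbedding_of_denseRange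
    Y.denseRange_stoneCechUnit_comp_ι

theorem tau_preimage_range :
    Y.tau ⁻¹' range (stoneCechUnit ∘ Y.ι) = range (stoneCechUnit : X → StoneCech X) := by
  refine (preimage_range_subset_range_of_comp_eq continuous_stoneCechUnit
    denseRange_stoneCechUnit Y.continuous_tau Y.isOpenEmbedding_stoneCechUnit_comp_ι
    Y.tau_comp_stoneCechUnit).antisymm ?_
  rintro _ ⟨x, rfl⟩
  exact ⟨x, (congrFun Y.tau_comp_stoneCechUnit x).symm⟩

theorem cechComplete_iff_isGδ_remainder : CechComplete Y.carrier ↔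
    IsGδ ((↑) ⁻¹' {stoneCechUnit Y.pt} : Set ↥(range (stoneCechUnit ∘ Y.ι))ᶜ) := by
  rw [CechComplete, range_stoneCechUnit,
    isGδ_union_iff_of_isOpen Y.isOpenEmbedding_stoneCechUnit_comp_ι.isOpen_range]

end OnePointExt

/-- Let `X` be a locally compact Tychonoff space and `Y = X ∪ {p}` a one-point
Tychonoff extension of `X`.  Then `Y` is Čech-complete if and only if `Θ_X(Y) = τ_Y⁻¹(p)` is a
zero-set of the subspace `βX \ X`. -/
theorem stmt5 {X : Type u} [TopologicalSpace X] [T35Space X] [LocallyCompactSpace X]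
    (Y : OnePointExt X) :
    CechComplete Y.carrier ↔
      IsZeroSet ((Subtype.val ⁻¹' Y.theta :
        Set ↥((Set.range (stoneCechUnit : X → StoneCech X))ᶜ))) := by
  have hτ : Y.tau ⁻¹' (range (stoneCechUnit ∘ Y.ι))ᶜ = (range stoneCechUnit)ᶜ := by
    rw [preimage_compl, Y.tau_preimage_range]
  have hmaps : MapsTo Y.tau (range stoneCechUnit)ᶜ (range (stoneCechUnit ∘ Y.ι))ᶜ :=
    hτ ▸ mapsTo_preimage _ _
  set g := hmaps.restrict
  have hg : Continuous g := Y.continuous_tau.restrict hmaps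
  have hg_surj : Function.Surjective g := by
    rw [MapsTo.restrict_surjective_iff, ← hτ, SurjOn, image_preimage_eq _ Y.surjective_tau]
  have : CompactSpace ↥(range (stoneCechUnit : X → StoneCech X))ᶜ :=
    isCompact_iff_compactSpace.1 isOpen_range_stoneCechUnit.isClosed_compl.isCompact
  have hclosed : IsClosed (g ⁻¹' ((↑) ⁻¹' {stoneCechUnit Y.pt})) :=
    isClosed_singleton.preimage hg.subtype_val
  rw [Y.cechComplete_iff_isGδ_remainder,
    ← isGδ_preimage_iff_of_isClosedMap hg hg.isClosedMap hg_surj]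
  -- `g ⁻¹' ((↑) ⁻¹' {p})` is `(↑) ⁻¹' Θ_X(Y)` by definition of `g` and `Θ_X(Y)`.
  exact hclosed.isZeroSet_iff_isGδ.symm
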